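/- arXiv:math/0208222 — 2 statements merged into one kernel-verified Lean document; each statement's English description precedes it below -/
import Mathlib

section
/- Let (C, F) be a pointed connected atomic site such that F is representable by an object A. For any morphism x : A ⟶ X, let H = { h ∈ Aut(A) | h ≫ x = x }. Then x exhibits X as the categorical quotient of A by the action of H: for every object Z and every morphism g : A ⟶ Z satisfying h ≫ g = g for all h ∈ H, there exists a unique morphism u : X ⟶ Z with x ≫ u = g. -/
/-!
Since `F ≅ Hom(A, -)` sends every morphism to a surjection, every arrow into `Y` out of `A` lifts
along any `X ⟶ Y`; lifting `𝟙 A` along an endomorphism `e` of `A` gives a section of `e` which is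
epi, so every endomorphism of `A` is an automorphism. To factor `g` through the strict epimorphism
`x`, let `p, q : W ⟶ A` be coequalized by `x` and pick any `a : A ⟶ W`. Then `a ≫ p` and `a ≫ q`
are automorphisms of `A` with the same composite with `x`, so they differ by an element of the
stabilizer `H`; hence `a ≫ p ≫ g = a ≫ q ≫ g`, and `a` can be cancelled.
-/

open CategoryTheory Opposite

universe u v

/-- A pointed connected atomic site: a small category `C` together with a
set-valued functor `F` such that (i) every morphism is a strict epimorphism,
(ii) every `F X` is nonempty, (iii) `F` sends morphisms to surjections, and
(iv) the category of elements of `F` is cofiltered. -/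
structure IsPCAS {C : Type u} [Category.{v} C] (F : C ⥤ Type v) : Prop where
  strict_epi : ∀ {Y X Z : C} (f : Y ⟶ X) (g : Y ⟶ Z),
    (∀ {W : C} (p q : W ⟶ Y), p ≫ f = q ≫ f → p ≫ g = q ≫ g) →
    ∃! u : X ⟶ Z, f ≫ u = g
  nonempty : ∀ X : C, Nonempty (F.obj X)
  surjective : ∀ {X Y : C} (f : X ⟶ Y), Function.Surjective (F.map f)
  cofiltered : IsCofiltered F.Elements

section

variable {C : Type u} [Category.{v} C] {F : C ⥤ Type v} {A : C}

theorem IsPCAS.epi (hF : IsPCAS F) {X Y : C} (f : X ⟶ Y) : Epi f :=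
  ⟨fun u v huv => (hF.strict_epi f (f ≫ u)
    (fun p q h => by rw [← Category.assoc, ← Category.assoc, h])).unique rfl huv.symm⟩

theorem exists_comp_eq_of_surjective_map (θ : coyoneda.obj (op A) ≅ F) {X Y : C} {f : X ⟶ Y}
    (hf : Function.Surjective (F.map f)) (t : A ⟶ Y) : ∃ s : A ⟶ X, s ≫ f = t := by
  obtain ⟨z, hz⟩ := hf (θ.hom.app Y t)
  refine ⟨θ.inv.app X z, ?_⟩
  calc θ.inv.app X z ≫ f = θ.inv.app Y (F.map f z) := (NatTrans.naturality_apply θ.inv f z).symm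
    _ = t := by rw [hz]; exact Iso.hom_inv_id_app_apply θ Y t

theorem IsPCAS.nonempty_hom (hF : IsPCAS F) (θ : coyoneda.obj (op A) ≅ F) (W : C) :
    Nonempty (A ⟶ W) :=
  (hF.nonempty W).map (θ.inv.app W)

theorem IsPCAS.isIso_of_endo (hF : IsPCAS F) (θ : coyoneda.obj (op A) ≅ F) (e : A ⟶ A) :
    IsIso e := by
  obtain ⟨t, ht⟩ := exists_comp_eq_of_surjective_map θ (hF.surjective e) (𝟙 A)
  have : Epi t := hF.epi t
  have : IsSplitMono t := IsSplitMono.mk' ⟨e, ht⟩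
  have : IsIso t := isIso_of_epi_of_isSplitMono t
  rw [← IsIso.inv_eq_of_hom_inv_id ht]
  infer_instance

theorem comp_eq_comp_of_stabilizer_invariant {X Z : C} {x : A ⟶ X} {g : A ⟶ Z}
    (hg : ∀ h : Aut A, h.hom ≫ x = x → h.hom ≫ g = g)
    (r s : A ⟶ A) [IsIso r] [IsIso s] (hrs : r ≫ x = s ≫ x) : r ≫ g = s ≫ g := by
  let h : Aut A := (asIso s).symm ≪≫ asIso r
  have hh : h.hom = inv s ≫ r := rfl
  have hx : h.hom ≫ x = x := by
    rw [hh, Category.assoc, IsIso.inv_comp_eq, hrs]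
  have hgh := hg h hx
  rwa [hh, Category.assoc, IsIso.inv_comp_eq] at hgh

end

/-- If `(C, F)` is a pointed connected atomic site with `F` representable by
`A`, then every arrow `x : A ⟶ X` is the categorical quotient of `A` by the
action of the stabilizer `H = { h ∈ Aut(A) | h ≫ x = x }`: every `g : A ⟶ Z`
invariant under `H` factors uniquely through `x`. -/
theorem stmt8 {C : Type u} [Category.{v} C] (F : C ⥤ Type v)
    (hF : IsPCAS F) (A : C) (θ : coyoneda.obj (op A) ≅ F) :
    ∀ {X Z : C} (x : A ⟶ X) (g : A ⟶ Z),
      (∀ h : Aut A, h.hom ≫ x = x → h.hom ≫ g = g) →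
      ∃! u : X ⟶ Z, x ≫ u = g := by
  intro X Z x g hg
  refine hF.strict_epi x g fun {W} p q hpq => ?_
  obtain ⟨a⟩ := hF.nonempty_hom θ W
  have := hF.isIso_of_endo θ (a ≫ p)
  have := hF.isIso_of_endo θ (a ≫ q)
  have hpq' : (a ≫ p) ≫ g = (a ≫ q) ≫ g :=
    comp_eq_comp_of_stabilizer_invariant hg _ _ (by simp only [Category.assoc, hpq])
  have := hF.epi a
  simpa only [Category.assoc, cancel_epi] using hpq'
end

section
/- Let (C, F) be a pointed connected atomic site such that F is representable by an object A. The assignment X ↦ Hom(A, X), with Aut(A) acting on the right by precomposition and with a morphism f : X ⟶ Y sent to postcomposition with f, defines a functor from C to the category of right Aut(A)-sets and equivariant maps. This functor is fully faithful: every Aut(A)-equivariant map Hom(A, X) → Hom(A, Y) is postcomposition by a unique morphism X ⟶ Y. Moreover each Hom(A, X) is nonempty and the right Aut(A)-action on it is transitive. -/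
open CategoryTheory Opposite

universe u v

/-!
Since `F ≅ Hom(A, -)` and `F` maps morphisms to surjections, every `y : A ⟶ Y` factors
through any `f : X ⟶ Y`. Taking `f = g : A ⟶ A` and `y = 𝟙 A` gives `g` a section, which is
epi and hence inverse to `g`; so `End(A) = Aut(A)` acts transitively on each `Hom(A, X)`.
An equivariant `φ` is then determined by `φ x₀` for a single `x₀ : A ⟶ X`, and `φ x₀`
coequalizes every pair coequalized by `x₀` (test the pair against some `w : A ⟶ W` and use
that `w ≫ p` and `w ≫ q` are automorphisms), so by strictness of the epimorphism `x₀` it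
factors as `x₀ ≫ f`.
-/

namespace IsPCAS

variable {C : Type u} [Category.{v} C] {F : C ⥤ Type v}

theorem epi_s10 (hF : IsPCAS F) {X Y : C} (f : X ⟶ Y) : Epi f where
  left_cancellation p q hpq := by
    obtain ⟨u, -, huniq⟩ := hF.strict_epi f (f ≫ p) fun r s h => by
      rw [← Category.assoc, ← Category.assoc, h]
    exact (huniq p rfl).trans (huniq q hpq.symm).symm

variable {A : C}

theorem nonempty_hom_s10 (hF : IsPCAS F) (θ : coyoneda.obj (op A) ≅ F) (X : C) :
    Nonempty (A ⟶ X) :=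
  ⟨θ.inv.app X (hF.nonempty X).some⟩

theorem exists_comp_eq (hF : IsPCAS F) (θ : coyoneda.obj (op A) ≅ F) {X Y : C}
    (f : X ⟶ Y) (y : A ⟶ Y) : ∃ x : A ⟶ X, x ≫ f = y := by
  obtain ⟨z, hz⟩ := hF.surjective f (θ.hom.app Y y)
  refine ⟨θ.inv.app X z, ?_⟩
  have hnat : θ.inv.app Y (F.map f z) = θ.inv.app X z ≫ f := NatTrans.naturality_apply θ.inv f z
  rw [← hnat, hz, Iso.hom_inv_id_app_apply]

theorem isIso_of_endo_s10 (hF : IsPCAS F) (θ : coyoneda.obj (op A) ≅ F) (g : A ⟶ A) :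
    IsIso g := by
  obtain ⟨s, hs⟩ := hF.exists_comp_eq θ g (𝟙 A)
  have := hF.epi_s10 s
  refine ⟨s, ?_, hs⟩
  rw [← cancel_epi s, ← Category.assoc, hs, Category.id_comp, Category.comp_id]

theorem exists_aut_comp_eq (hF : IsPCAS F) (θ : coyoneda.obj (op A) ≅ F) {X : C}
    (x y : A ⟶ X) : ∃ h : Aut A, h.hom ≫ x = y := by
  obtain ⟨g, hg⟩ := hF.exists_comp_eq θ x y
  have := hF.isIso_of_endo_s10 θ g
  exact ⟨asIso g, hg⟩

theorem apply_comp_of_equivariant (hF : IsPCAS F) (θ : coyoneda.obj (op A) ≅ F) {X Y : C}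
    {φ : (A ⟶ X) → (A ⟶ Y)} (hφ : ∀ (h : Aut A) (x : A ⟶ X), φ (h.hom ≫ x) = h.hom ≫ φ x)
    (g : A ⟶ A) (x : A ⟶ X) : φ (g ≫ x) = g ≫ φ x := by
  have := hF.isIso_of_endo_s10 θ g
  exact hφ (asIso g) x

theorem existsUnique_comp_of_equivariant (hF : IsPCAS F) (θ : coyoneda.obj (op A) ≅ F)
    {X Y : C} {φ : (A ⟶ X) → (A ⟶ Y)}
    (hφ : ∀ (h : Aut A) (x : A ⟶ X), φ (h.hom ≫ x) = h.hom ≫ φ x) :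
    ∃! f : X ⟶ Y, ∀ x : A ⟶ X, φ x = x ≫ f := by
  have hφ' := hF.apply_comp_of_equivariant θ hφ
  obtain ⟨x₀⟩ := hF.nonempty_hom_s10 θ X
  have hcoeq : ∀ {W : C} (p q : W ⟶ A), p ≫ x₀ = q ≫ x₀ → p ≫ φ x₀ = q ≫ φ x₀ := by
    intro W p q hpq
    obtain ⟨w⟩ := hF.nonempty_hom_s10 θ W
    have := hF.epi_s10 w
    rw [← cancel_epi w, ← Category.assoc, ← Category.assoc, ← hφ', ← hφ',
      Category.assoc, Category.assoc, hpq]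
  obtain ⟨f, hf, -⟩ := hF.strict_epi x₀ (φ x₀) hcoeq
  have := hF.epi_s10 x₀
  refine ⟨f, fun x => ?_, fun f' hf' => by rw [← cancel_epi x₀, hf, hf' x₀]⟩
  obtain ⟨g, rfl⟩ := hF.exists_comp_eq θ x₀ x
  rw [hφ', ← hf, Category.assoc]

end IsPCAS

/-- If `(C, F)` is a pointed connected atomic site with `F` representable by
`A`, the assignment `X ↦ Hom(A, X)` (with `Aut(A)` acting on the right by
precomposition, and morphisms acting by postcomposition) is a fully faithful
functor from `C` into right `Aut(A)`-sets: postcomposition by any morphism is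
equivariant, and every equivariant map `Hom(A, X) → Hom(A, Y)` is
postcomposition by a unique morphism `X ⟶ Y`.  Moreover each `Hom(A, X)` is a
nonempty transitive `Aut(A)`-set. -/
theorem stmt10 {C : Type u} [Category.{v} C] (F : C ⥤ Type v)
    (hF : IsPCAS F) (A : C) (θ : coyoneda.obj (op A) ≅ F) :
    -- postcomposition is equivariant (functoriality into Aut(A)-sets)
    (∀ {X Y : C} (f : X ⟶ Y) (h : Aut A) (x : A ⟶ X),
      (h.hom ≫ x) ≫ f = h.hom ≫ (x ≫ f)) ∧
    -- full faithfulness: every equivariant map is postcomposition by a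
    -- unique morphism
    (∀ (X Y : C) (φ : (A ⟶ X) → (A ⟶ Y)),
      (∀ (h : Aut A) (x : A ⟶ X), φ (h.hom ≫ x) = h.hom ≫ φ x) →
      ∃! f : X ⟶ Y, ∀ x : A ⟶ X, φ x = x ≫ f) ∧
    -- each `Hom(A, X)` is nonempty
    (∀ X : C, Nonempty (A ⟶ X)) ∧
    -- and the right `Aut(A)`-action on it is transitive
    (∀ (X : C) (x y : A ⟶ X), ∃ h : Aut A, h.hom ≫ x = y) :=
  ⟨fun _ _ _ => Category.assoc _ _ _,
    fun _ _ _ hφ => hF.existsUnique_comp_of_equivariant θ hφ,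
    hF.nonempty_hom_s10 θ,
    fun _ => hF.exists_aut_comp_eq θ⟩
end
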